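/- arXiv:1412.0725 — 2 statements merged into one kernel-verified Lean document; each statement's English description precedes it below -/
import Mathlib

section
/- For α(u) = 1 − (log(u + e²))^{−ε} with ε ≥ 1, one has limsup_{R→∞} R ∫_R^∞ u^{−1−α(u)} du < ∞, i.e., R ∫_R^∞ u^{−2+(log(u+e²))^{−ε}} du is bounded as R → ∞. -/
/-!
Write `δ(u) = log (u + e²) ^ (-ε)`. Since `δ` is decreasing and `u ≥ 1`, on `(R, ∞)` the integrand is
at most `u ^ (-2 + δ(R))`, whose tail integral is `R ^ (δ(R) - 1) / (1 - δ(R))`. Here `δ(R) ≤ 1/2`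
because `log (R + e²) ≥ 2`, and `R ^ δ(R) ≤ e` because `log R ≤ log (R + e²) ≤ log (R + e²) ^ ε`.
-/

open MeasureTheory Filter Set Real

lemma mul_setIntegral_Ioi_rpow_le {p : ℝ → ℝ} (hp : Measurable p) {δ R : ℝ} (hδ : δ < 1)
    (hR : 1 ≤ R) (hpδ : ∀ u ∈ Ioi R, p u ≤ -2 + δ) :
    R * ∫ u in Ioi R, u ^ p u ≤ R ^ δ / (1 - δ) := by
  have hR₀ : 0 < R := by linarith
  have hlt : -2 + δ < -1 := by linarith
  have hbound : ∀ u ∈ Ioi R, u ^ p u ≤ u ^ (-2 + δ) := fun u hu =>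
    rpow_le_rpow_of_exponent_le (hR.trans (le_of_lt hu)) (hpδ u hu)
  have hmajorant : IntegrableOn (fun u : ℝ => u ^ (-2 + δ)) (Ioi R) :=
    integrableOn_Ioi_rpow_of_lt hlt hR₀
  have hintegrable : IntegrableOn (fun u : ℝ => u ^ p u) (Ioi R) := by
    refine hmajorant.mono' (measurable_id.pow hp).aestronglyMeasurable ?_
    filter_upwards [ae_restrict_mem measurableSet_Ioi] with u hu
    rw [norm_of_nonneg (rpow_nonneg (hR₀.trans hu).le _)]
    exact hbound u hu
  calc R * ∫ u in Ioi R, u ^ p u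
      ≤ R * ∫ u in Ioi R, u ^ (-2 + δ) :=
        mul_le_mul_of_nonneg_left
          (setIntegral_mono_on hintegrable hmajorant measurableSet_Ioi hbound) hR₀.le
    _ = R ^ δ / (1 - δ) := by
        rw [integral_Ioi_rpow_of_lt hlt hR₀, show -2 + δ + 1 = δ - 1 by ring,
          rpow_sub hR₀, rpow_one]
        field_simp [show (δ - 1) ≠ 0 by linarith, show (1 - δ) ≠ 0 by linarith]
        ring

lemma rpow_rpow_neg_le_exp_one {R L ε : ℝ} (hR : 0 < R) (hL : 1 ≤ L) (hε : 1 ≤ ε)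
    (hRL : log R ≤ L) : R ^ L ^ (-ε) ≤ exp 1 := by
  rw [rpow_def_of_pos hR, exp_le_exp]
  calc log R * L ^ (-ε) ≤ L * L ^ (-ε) :=
        mul_le_mul_of_nonneg_right hRL (rpow_nonneg (by linarith) _)
    _ = L ^ (1 - ε) := by
        rw [sub_eq_add_neg, rpow_add (by linarith), rpow_one]
    _ ≤ 1 := rpow_le_one_of_one_le_of_nonpos hL (by linarith)

lemma two_le_log_add_exp_two {u : ℝ} (hu : 0 ≤ u) : 2 ≤ log (u + exp 2) := by
  rw [le_log_iff_exp_le (by positivity)]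
  linarith

theorem stmt_8 (ε : ℝ) (hε : 1 ≤ ε) :
    ∃ C : ℝ, ∀ᶠ R : ℝ in atTop,
      R * ∫ u in Set.Ioi R, u ^ (-2 + (Real.log (u + Real.exp 2)) ^ (-ε)) ≤ C := by
  refine ⟨exp 1 / (1 / 2), ?_⟩
  filter_upwards [eventually_ge_atTop 1] with R hR
  set L := log (R + exp 2)
  have hL : 2 ≤ L := two_le_log_add_exp_two (by linarith)
  have hδ : L ^ (-ε) ≤ 1 / 2 :=
    calc L ^ (-ε) ≤ L ^ (-1 : ℝ) := rpow_le_rpow_of_exponent_le (by linarith) (by linarith)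
      _ ≤ 1 / 2 := by rw [rpow_neg_one, one_div]; exact inv_anti₀ two_pos hL
  have hexponent : ∀ u ∈ Ioi R, -2 + log (u + exp 2) ^ (-ε) ≤ -2 + L ^ (-ε) := by
    intro u hu
    have hLu : L ≤ log (u + exp 2) :=
      log_le_log (by positivity) (by linarith [mem_Ioi.mp hu])
    linarith [rpow_le_rpow_of_nonpos (by linarith) hLu (by linarith : -ε ≤ 0)]
  have hRL : log R ≤ L := log_le_log (by linarith) (by linarith [exp_pos 2])
  calc R * ∫ u in Ioi R, u ^ (-2 + log (u + exp 2) ^ (-ε))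
      ≤ R ^ L ^ (-ε) / (1 - L ^ (-ε)) :=
        mul_setIntegral_Ioi_rpow_le (by fun_prop) (by linarith) hR hexponent
    _ ≤ exp 1 / (1 / 2) :=
        div_le_div₀ (exp_pos 1).le (rpow_rpow_neg_le_exp_one (by linarith) (by linarith) hε hRL)
          (by norm_num) (by linarith)
end

section
/- Let φ(ξ) = ∫_ℝ (1 − cos(ξh)) |h|^{−1−α(|h|)} dh with α(u) = 1 − (log(u+e²))^{−ε}, ε > 0. Then for 0 < |ξ| < 1, φ(ξ) ≥ c |ξ|^{1 − (log(π/|ξ| + e²))^{−ε}}, where c = ∫_{π/2}^{π} (1 − cos u) u^{−2} du > 0. -/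
/-!
The integrand being nonnegative, restrict the integral to `h ∈ (π / (2|ξ|), π / |ξ|)`.
There `h > 1` and, `α` being increasing, `α h ≤ β := 1 - log (π / |ξ| + e²) ^ (-ε)`, so
`h ^ (-1 - α h) ≥ h ^ (-1 - β)`. The substitution `u = |ξ| h` turns the truncated integral
into `|ξ| ^ β ∫_{π/2}^{π} (1 - cos u) u ^ (-1 - β) du`, and `β ≤ 1` with `u ≥ 1` bounds the
last integral below by `c`.
-/

open MeasureTheory Real Set

lemma integrableOn_mul_rpow_Ioo {F : ℝ → ℝ} (hF : Continuous F) (p : ℝ) {a : ℝ} (ha : 0 < a)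
    (b : ℝ) : IntegrableOn (fun u => F u * u ^ p) (Ioo a b) :=
  ((hF.continuousOn.mul (continuousOn_id.rpow_const fun _ hx =>
    Or.inl (ha.trans_le hx.1).ne')).integrableOn_Icc).mono_set Ioo_subset_Icc_self

lemma integral_one_sub_cos_mul_rpow_pos (p : ℝ) :
    0 < ∫ u in Ioo (π / 2) π, (1 - cos u) * u ^ p := by
  have hlt : π / 2 < π := by linarith [pi_pos]
  rw [← integral_Ioc_eq_integral_Ioo, ← intervalIntegral.integral_of_le hlt.le]
  refine intervalIntegral.intervalIntegral_pos_of_pos_on ?_ (fun u hu => ?_) hlt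
  · exact (intervalIntegrable_iff_integrableOn_Ioo_of_le hlt.le).2
      (integrableOn_mul_rpow_Ioo (continuous_const.sub continuous_cos) p (by positivity) π)
  · have hcos : cos u ≤ 0 := cos_nonpos_of_pi_div_two_le_of_le hu.1.le (by linarith [hu.2])
    exact mul_pos (by linarith) (rpow_pos_of_pos (by linarith [hu.1, pi_pos]) p)

lemma setIntegral_one_sub_cos_mul_rpow_mono {a b p q : ℝ} (ha : 1 ≤ a) (hpq : p ≤ q) :
    ∫ u in Ioo a b, (1 - cos u) * u ^ p ≤ ∫ u in Ioo a b, (1 - cos u) * u ^ q :=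
  setIntegral_mono_on
    (integrableOn_mul_rpow_Ioo (continuous_const.sub continuous_cos) p (by linarith) b)
    (integrableOn_mul_rpow_Ioo (continuous_const.sub continuous_cos) q (by linarith) b)
    measurableSet_Ioo fun u hu =>
      mul_le_mul_of_nonneg_left (rpow_le_rpow_of_exponent_le (ha.trans hu.1.le) hpq)
        (sub_nonneg.2 (cos_le_one u))

lemma setIntegral_comp_mul_left_mul_rpow (f : ℝ → ℝ) (r : ℝ) {s a b : ℝ} (hs : 0 < s)
    (ha : 0 ≤ a) (hab : a ≤ b) :
    ∫ h in Ioo a b, f (s * h) * h ^ r = s ^ (-1 - r) * ∫ u in Ioo (s * a) (s * b), f u * u ^ r := by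
  have hsab : s * a ≤ s * b := mul_le_mul_of_nonneg_left hab hs.le
  rw [← integral_Ioc_eq_integral_Ioo, ← integral_Ioc_eq_integral_Ioo,
    ← intervalIntegral.integral_of_le hab, ← intervalIntegral.integral_of_le hsab]
  have hpow : ∀ h ∈ uIcc a b, f (s * h) * h ^ r = s ^ (-r) * (f (s * h) * (s * h) ^ r) := by
    intro h hh
    rw [uIcc_of_le hab] at hh
    rw [mul_rpow hs.le (ha.trans hh.1), rpow_neg hs.le]
    field_simp
  rw [intervalIntegral.integral_congr hpow, intervalIntegral.integral_const_mul,
    intervalIntegral.integral_comp_mul_left (fun u => f u * u ^ r) hs.ne', smul_eq_mul,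
    ← mul_assoc, ← rpow_neg_one, ← rpow_add hs]
  congr 2
  ring

lemma log_add_exp_two_rpow_neg_anti {ε x y : ℝ} (hε : 0 ≤ ε) (hx : 0 ≤ x) (hxy : x ≤ y) :
    log (y + exp 2) ^ (-ε) ≤ log (x + exp 2) ^ (-ε) := by
  have hx1 : 1 < x + exp 2 := by linarith [add_one_lt_exp (two_ne_zero (α := ℝ))]
  exact rpow_le_rpow_of_nonpos (log_pos hx1) (log_le_log (by linarith) (by linarith))
    (neg_nonpos.2 hε)

theorem stmt_12 (ε : ℝ) (hε : 0 < ε)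
    (α : ℝ → ℝ) (hα : ∀ u, α u = 1 - (Real.log (u + Real.exp 2)) ^ (-ε))
    (hint : ∀ ξ : ℝ, Integrable
      (fun h : ℝ => (1 - Real.cos (ξ * h)) * |h| ^ (-1 - α |h|)) volume) :
    0 < ∫ u in Set.Ioo (Real.pi / 2) Real.pi, (1 - Real.cos u) * u ^ (-2 : ℝ) ∧
    ∀ ξ : ℝ, 0 < |ξ| → |ξ| < 1 →
      (∫ u in Set.Ioo (Real.pi / 2) Real.pi, (1 - Real.cos u) * u ^ (-2 : ℝ)) *
          |ξ| ^ (1 - (Real.log (Real.pi / |ξ| + Real.exp 2)) ^ (-ε)) ≤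
        ∫ h : ℝ, (1 - Real.cos (ξ * h)) * |h| ^ (-1 - α |h|) := by
  refine ⟨integral_one_sub_cos_mul_rpow_pos _, fun ξ hξ hξ1 => ?_⟩
  set β := 1 - log (π / |ξ| + exp 2) ^ (-ε)
  have hβ : β ≤ 1 := sub_le_self 1 <| rpow_nonneg (log_nonneg <| by
    linarith [div_pos pi_pos hξ, add_one_lt_exp (two_ne_zero (α := ℝ))]) _
  have ha : 1 < π / 2 / |ξ| := by rw [lt_div_iff₀ hξ]; linarith [pi_gt_three]
  have hab : π / 2 / |ξ| ≤ π / |ξ| := div_le_div_of_nonneg_right (by linarith [pi_pos]) hξ.le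
  have hintegrand_le : ∀ h ∈ Ioo (π / 2 / |ξ|) (π / |ξ|),
      (1 - cos (|ξ| * h)) * h ^ (-1 - β) ≤ (1 - cos (ξ * h)) * |h| ^ (-1 - α |h|) := by
    intro h hh
    have hh1 : 1 ≤ h := (ha.trans hh.1).le
    have hh0 : 0 ≤ h := by linarith
    rw [abs_of_nonneg hh0, ← cos_abs (ξ * h), abs_mul, abs_of_nonneg hh0, hα]
    refine mul_le_mul_of_nonneg_left (rpow_le_rpow_of_exponent_le hh1 ?_)
      (sub_nonneg.2 (cos_le_one _))
    linarith [log_add_exp_two_rpow_neg_anti hε.le (by linarith) hh.2.le]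
  calc _ ≤ |ξ| ^ β * ∫ u in Ioo (π / 2) π, (1 - cos u) * u ^ (-1 - β) := by
        rw [mul_comm]
        exact mul_le_mul_of_nonneg_left (setIntegral_one_sub_cos_mul_rpow_mono
          (by linarith [pi_gt_three]) (by linarith)) (rpow_nonneg hξ.le β)
    _ = ∫ h in Ioo (π / 2 / |ξ|) (π / |ξ|), (1 - cos (|ξ| * h)) * h ^ (-1 - β) := by
        rw [setIntegral_comp_mul_left_mul_rpow (fun u => 1 - cos u) _ hξ (by positivity) hab,
          mul_div_cancel₀ _ hξ.ne', mul_div_cancel₀ _ hξ.ne', sub_sub_cancel]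
    _ ≤ ∫ h in Ioo (π / 2 / |ξ|) (π / |ξ|), (1 - cos (ξ * h)) * |h| ^ (-1 - α |h|) :=
        setIntegral_mono_on (integrableOn_mul_rpow_Ioo (by fun_prop) _ (by linarith) _)
          (hint ξ).integrableOn measurableSet_Ioo hintegrand_le
    _ ≤ _ := setIntegral_le_integral (hint ξ) (.of_forall fun h =>
        mul_nonneg (sub_nonneg.2 (cos_le_one _)) (rpow_nonneg (abs_nonneg h) _))
end
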